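/- Let ω be the block partial permutation [[I_{r₁}, 0, 0, 0], [0, 0, I_{r₂}, 0], [0, 0, 0, 0]] as above, Q ∈ X_ω, and N an m×n matrix normal to X_ω at Q (with respect to ⟨A,B⟩ = tr(AᵀB)). Write N = (N₁ | ⋯ | N_n) column-wise. Then N_j lies in the orthogonal complement of the column space C(Q) for every j with r₁ + n₁ + 1 ≤ j ≤ n; consequently, the isometry Φ_Q (left multiplication by the reflection U_Q through C(Q)) sends N to the matrix whose j-th column is U_Q N_j for j ≤ r₁ + n₁ and −N_j for j > r₁ + n₁. -/

import Mathlib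

open Matrix

/-- Upper-left `p × q` submatrix. -/
def ulSub {m n : ℕ} (A : Matrix (Fin m) (Fin n) ℝ) (p q : ℕ) (hp : p ≤ m) (hq : q ≤ n) :
    Matrix (Fin p) (Fin q) ℝ :=
  A.submatrix (Fin.castLE hp) (Fin.castLE hq)

/-- The block partial permutation `[[I_{r₁},0,0,0],[0,0,I_{r₂},0],[0,0,0,0]]`. -/
def omegaBlk (r₁ r₂ m₁ n₁ n₂ : ℕ) :
    Matrix (Fin (r₁ + r₂ + m₁)) (Fin (r₁ + n₁ + r₂ + n₂)) ℝ :=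
  Matrix.of fun i j =>
    if (i.val < r₁ ∧ j.val = i.val) ∨
        (r₁ ≤ i.val ∧ i.val < r₁ + r₂ ∧ j.val = i.val + n₁) then 1 else 0

/-- Membership in the regular part `X_ω`. -/
def memX {m n : ℕ} (ω A : Matrix (Fin m) (Fin n) ℝ) : Prop :=
  ∀ (p q : ℕ) (_ : 1 ≤ p) (_ : 1 ≤ q) (hp : p ≤ m) (hq : q ≤ n),
    (ulSub A p q hp hq).rank = (ulSub ω p q hp hq).rank

/-- The column space `C(Q)` of a matrix `Q`. -/
noncomputable def colSpace {m n : ℕ} (Q : Matrix (Fin m) (Fin n) ℝ) :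
    Submodule ℝ (EuclideanSpace ℝ (Fin m)) :=
  Submodule.span ℝ (Set.range fun j : Fin n =>
    (show EuclideanSpace ℝ (Fin m) from WithLp.toLp 2 fun i => Q i j))

/-! A column `w = Q c ∈ C(Q)` placed in position `j ≥ r₁ + n₁` is a tangent direction of `X_ω`
at `Q`. Along `Q + t w e_jᵀ = Q (1 + t c e_jᵀ)` no upper-left `p × q` block gains rank, since the
column space cannot grow and the first `j` columns do not move, and by lower semicontinuity of the
rank no block loses rank for small `t`; for `q ≥ r₁ + n₁` the rank profile
`min(p, q - n₁, r₁ + r₂)` of `ω` is squeezed between these bounds. Pairing `N` with these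
directions gives `⟨w, N_j⟩ = 0` for all `w ∈ C(Q)`, and then `U N_j = -N_j`. -/

open Filter Topology Submodule Module

theorem Matrix.eventually_rank_le_rank {𝕜 : Type*} [NontriviallyNormedField 𝕜] [CompleteSpace 𝕜]
    {m n : Type*} [Fintype m] [Fintype n] (A : Matrix m n 𝕜) :
    ∀ᶠ B in 𝓝 A, A.rank ≤ B.rank := by
  obtain ⟨κ, a, ha, hspan, hli⟩ := exists_linearIndependent' 𝕜 A.row
  have : Finite κ := Finite.of_injective a ha
  have : Fintype κ := Fintype.ofFinite κ
  have hA : A.rank = Fintype.card κ := by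
    rw [rank_eq_finrank_span_row, ← hspan, ← hli.rank_matrix (M := A.submatrix a id),
      rank_eq_finrank_span_row]
    rfl
  have hcont : Continuous fun B : Matrix m n 𝕜 => (B.submatrix a id).row :=
    continuous_pi fun k => continuous_apply (a k)
  filter_upwards [(hcont.tendsto A).eventually hli.eventually] with B hB
  calc A.rank = (B.submatrix a id).rank := by rw [hA, hB.rank_matrix]
    _ ≤ B.rank := rank_submatrix_le _ _ _

theorem Matrix.rank_le_rank_submatrix_castLE_add {K : Type*} [Field K] {p q j : ℕ}
    (B : Matrix (Fin p) (Fin q) K) (hj : j ≤ q) :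
    B.rank ≤ (B.submatrix id (Fin.castLE hj)).rank + (q - j) := by
  let tail : Fin (q - j) → Fin p → K := fun l => B.col ⟨j + l, by omega⟩
  have hle : span K (Set.range B.col) ≤
      span K (Set.range (B.submatrix id (Fin.castLE hj)).col) ⊔ span K (Set.range tail) := by
    rw [span_le]
    rintro _ ⟨l, rfl⟩
    by_cases hl : l.val < j
    · exact mem_sup_left (subset_span ⟨⟨l, hl⟩, rfl⟩)
    · exact mem_sup_right (subset_span ⟨⟨l - j, by omega⟩, by simp only [tail]; congr; omega⟩)
  rw [rank_eq_finrank_span_cols, rank_eq_finrank_span_cols]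
  calc _ ≤ _ := finrank_mono hle
    _ ≤ _ := finrank_add_le_finrank_add_finrank _ _
    _ ≤ _ := by
      gcongr
      exact (finrank_range_le_card tail).trans_eq (Fintype.card_fin _)

theorem Matrix.trace_transpose_mul_vecMulVec_single_one {R m n : Type*} [CommSemiring R]
    [Fintype m] [Fintype n] [DecidableEq n] (N : Matrix m n R) (w : m → R) (j : n) :
    trace (Nᵀ * vecMulVec w (Pi.single j 1)) = w ⬝ᵥ N.col j := by
  rw [mul_vecMulVec, trace_vecMulVec, dotProduct_single_one, mulVec_transpose]
  rfl

theorem Matrix.add_smul_vecMulVec_mulVec {R m n : Type*} [CommSemiring R] [Fintype n]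
    [DecidableEq n] (A : Matrix m n R) (c v : n → R) (t : R) :
    A + t • vecMulVec (A *ᵥ c) v = A * (1 + t • vecMulVec c v) := by
  rw [Matrix.mul_add, Matrix.mul_one, Matrix.mul_smul, mul_vecMulVec]

theorem mem_tangentConeAt_of_eventually_add_smul_mem {𝕜 E : Type*} [NontriviallyNormedField 𝕜]
    [AddCommGroup E] [Module 𝕜 E] [TopologicalSpace E] [ContinuousSMul 𝕜 E] {s : Set E}
    {x y : E} (h : ∀ᶠ t in 𝓝 (0 : 𝕜), x + t • y ∈ s) : y ∈ tangentConeAt 𝕜 s x :=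
  mem_tangentConeAt_of_add_smul_mem tendsto_id (nhdsWithin_le_nhds h)

theorem mem_colSpace_iff {m n : ℕ} (Q : Matrix (Fin m) (Fin n) ℝ)
    (u : EuclideanSpace ℝ (Fin m)) : u ∈ colSpace Q ↔ ∃ c, Q *ᵥ c = u.ofLp := by
  rw [colSpace, mem_span_range_iff_exists_fun]
  refine exists_congr fun c => ⟨fun h => ?_, fun h => ?_⟩
  · subst h; ext i; simp [mulVec, dotProduct, mul_comm]
  · ext i; rw [← h]; simp [mulVec, dotProduct, mul_comm]

theorem toLp_mem_orthogonal_colSpace_iff {m n : ℕ} (Q : Matrix (Fin m) (Fin n) ℝ)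
    (v : Fin m → ℝ) : WithLp.toLp 2 v ∈ (colSpace Q)ᗮ ↔ ∀ c, Q *ᵥ c ⬝ᵥ v = 0 := by
  simp only [mem_orthogonal, mem_colSpace_iff]
  constructor
  · intro h c
    simpa [EuclideanSpace.inner_eq_star_dotProduct, dotProduct_comm] using
      h (WithLp.toLp 2 (Q *ᵥ c)) ⟨c, rfl⟩
  · rintro h u ⟨c, hc⟩
    simpa [EuclideanSpace.inner_eq_star_dotProduct, ← hc, dotProduct_comm] using h c

theorem memX.rank_ulSub_eq {m n : ℕ} {ω A : Matrix (Fin m) (Fin n) ℝ} (h : memX ω A)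
    (p q : ℕ) (hp : p ≤ m) (hq : q ≤ n) :
    (ulSub A p q hp hq).rank = (ulSub ω p q hp hq).rank := by
  by_cases hpq : 1 ≤ p ∧ 1 ≤ q
  · exact h p q hpq.1 hpq.2 hp hq
  · have := (ulSub A p q hp hq).rank_le_height
    have := (ulSub A p q hp hq).rank_le_width
    have := (ulSub ω p q hp hq).rank_le_height
    have := (ulSub ω p q hp hq).rank_le_width
    omega

theorem eventually_memX {α : Type*} {l : Filter α} {m n : ℕ} {ω : Matrix (Fin m) (Fin n) ℝ}
    {A : α → Matrix (Fin m) (Fin n) ℝ}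
    (h : ∀ p q (hp : p ≤ m) (hq : q ≤ n),
      ∀ᶠ x in l, (ulSub (A x) p q hp hq).rank = (ulSub ω p q hp hq).rank) :
    ∀ᶠ x in l, memX ω (A x) := by
  have : ∀ᶠ x in l, ∀ pq : Fin (m + 1) × Fin (n + 1),
      (ulSub (A x) pq.1 pq.2 pq.1.is_le pq.2.is_le).rank =
        (ulSub ω pq.1 pq.2 pq.1.is_le pq.2.is_le).rank :=
    eventually_all.2 fun pq => h _ _ _ _
  filter_upwards [this] with x hx p q _ _ hp hq
  exact hx (⟨p, by omega⟩, ⟨q, by omega⟩)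

theorem ulSub_add_smul_vecMulVec_single_of_le {m n p q : ℕ} (A : Matrix (Fin m) (Fin n) ℝ)
    (w : Fin m → ℝ) (t : ℝ) (j : Fin n) (hp : p ≤ m) (hq : q ≤ n) (hqj : q ≤ j) :
    ulSub (A + t • vecMulVec w (Pi.single j 1)) p q hp hq = ulSub A p q hp hq := by
  ext i l
  have : Fin.castLE hq l ≠ j := Fin.ne_of_val_ne (by rw [Fin.val_castLE]; omega)
  simp [ulSub, vecMulVec_apply, this]

theorem rank_ulSub_mul_le {m n k p q : ℕ} (A : Matrix (Fin m) (Fin n) ℝ)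
    (M : Matrix (Fin n) (Fin k) ℝ) (hp : p ≤ m) (hq : q ≤ k) :
    (ulSub (A * M) p q hp hq).rank ≤ (ulSub A p n hp le_rfl).rank := by
  have : ulSub (A * M) p q hp hq =
      ulSub A p n hp le_rfl * M.submatrix (Fin.castLE le_rfl) (Fin.castLE hq) :=
    submatrix_mul _ _ _ _ _ (by simp)
  rw [this]
  exact rank_mul_le_left _ _

theorem rank_ulSub_omegaBlk {r₁ r₂ m₁ n₁ n₂ p q : ℕ} (hp : p ≤ r₁ + r₂ + m₁)
    (hq : q ≤ r₁ + n₁ + r₂ + n₂) (hq₁ : r₁ + n₁ ≤ q) :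
    (ulSub (omegaBlk r₁ r₂ m₁ n₁ n₂) p q hp hq).rank = min p (min (q - n₁) (r₁ + r₂)) := by
  generalize hs : min p (min (q - n₁) (r₁ + r₂)) = s
  apply le_antisymm
  · refine (Matrix.rank_le_card_of_support_subset _ {i | i.val < s} fun i hi => ?_).trans_eq
      (by rw [Fin.card_filter_val_lt]; omega)
    simp only [Finset.coe_filter, Finset.mem_univ, true_and, Set.mem_ofPred_eq]
    by_contra! his
    refine hi (funext fun l => ?_)
    simp only [ulSub, omegaBlk, Matrix.row, submatrix_apply, of_apply, Fin.val_castLE,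
      Pi.zero_apply]
    rw [if_neg (by omega)]
  · let pivot : Fin s → Fin q :=
      fun i => ⟨if i.val < r₁ then i else i + n₁, by split_ifs <;> omega⟩
    have hone : (ulSub (omegaBlk r₁ r₂ m₁ n₁ n₂) p q hp hq).submatrix
        (Fin.castLE (by omega : s ≤ p)) pivot = 1 := by
      ext i i'
      simp only [ulSub, omegaBlk, pivot, submatrix_apply, of_apply, Fin.val_castLE, one_apply,
        Fin.ext_iff]
      split_ifs <;> first | rfl | omega
    calc s = (1 : Matrix (Fin s) (Fin s) ℝ).rank := by rw [rank_one, Fintype.card_fin]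
      _ ≤ _ := hone ▸ rank_submatrix_le _ _ _

section TangentDirections

variable {r₁ r₂ m₁ n₁ n₂ : ℕ} {Q : Matrix (Fin (r₁ + r₂ + m₁)) (Fin (r₁ + n₁ + r₂ + n₂)) ℝ}
  {j : Fin (r₁ + n₁ + r₂ + n₂)}

theorem eventually_rank_ulSub_add_smul_vecMulVec (hQ : memX (omegaBlk r₁ r₂ m₁ n₁ n₂) Q)
    (hj : r₁ + n₁ ≤ j) (c : Fin (r₁ + n₁ + r₂ + n₂) → ℝ) (p q : ℕ) (hp : p ≤ r₁ + r₂ + m₁)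
    (hq : q ≤ r₁ + n₁ + r₂ + n₂) :
    ∀ᶠ t in 𝓝 (0 : ℝ), (ulSub (Q + t • vecMulVec (Q *ᵥ c) (Pi.single j 1)) p q hp hq).rank =
      (ulSub (omegaBlk r₁ r₂ m₁ n₁ n₂) p q hp hq).rank := by
  set Qt := fun t : ℝ => Q + t • vecMulVec (Q *ᵥ c) (Pi.single j 1)
  by_cases hqj : q ≤ j
  · refine Eventually.of_forall fun t => ?_
    rw [ulSub_add_smul_vecMulVec_single_of_le _ _ _ _ _ _ hqj]
    exact hQ.rank_ulSub_eq p q hp hq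
  have hcont : Continuous fun t => ulSub (Qt t) p q hp hq := by
    unfold ulSub; fun_prop
  have hlower := (hcont.tendsto' 0 _ (by simp [Qt])).eventually
    (ulSub Q p q hp hq).eventually_rank_le_rank
  filter_upwards [hlower] with t ht
  change (ulSub (Qt t) p q hp hq).rank = _
  have hhead : (ulSub (Qt t) p q hp hq).rank ≤ (ulSub Q p j hp j.is_lt.le).rank + (q - j) := by
    have := (ulSub (Qt t) p q hp hq).rank_le_rank_submatrix_castLE_add (by omega : (j : ℕ) ≤ q)
    rwa [← ulSub_add_smul_vecMulVec_single_of_le Q (Q *ᵥ c) t j hp _ le_rfl]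
  have hfull : (ulSub (Qt t) p q hp hq).rank ≤ (ulSub Q p _ hp le_rfl).rank := by
    simp only [Qt]
    rw [add_smul_vecMulVec_mulVec]
    exact rank_ulSub_mul_le _ _ _ _
  rw [hQ.rank_ulSub_eq] at ht hhead hfull
  rw [rank_ulSub_omegaBlk _ _ (by omega)] at ht hhead hfull ⊢
  omega

theorem vecMulVec_mulVec_single_mem_tangentConeAt (hQ : memX (omegaBlk r₁ r₂ m₁ n₁ n₂) Q)
    (hj : r₁ + n₁ ≤ j) (c : Fin (r₁ + n₁ + r₂ + n₂) → ℝ) :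
    vecMulVec (Q *ᵥ c) (Pi.single j 1) ∈
      tangentConeAt ℝ {B | memX (omegaBlk r₁ r₂ m₁ n₁ n₂) B} Q :=
  mem_tangentConeAt_of_eventually_add_smul_mem <| eventually_memX fun p q hp hq =>
    eventually_rank_ulSub_add_smul_vecMulVec hQ hj c p q hp hq

end TangentDirections

theorem normal_columns_perp_general (r₁ r₂ m₁ n₁ n₂ : ℕ)
    (Q : Matrix (Fin (r₁ + r₂ + m₁)) (Fin (r₁ + n₁ + r₂ + n₂)) ℝ)
    (hQ : memX (omegaBlk r₁ r₂ m₁ n₁ n₂) Q)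
    (N : Matrix (Fin (r₁ + r₂ + m₁)) (Fin (r₁ + n₁ + r₂ + n₂)) ℝ)
    (hN : ∀ T ∈ tangentConeAt ℝ {B | memX (omegaBlk r₁ r₂ m₁ n₁ n₂) B} Q,
      Matrix.trace (Nᵀ * T) = 0)
    (U : Matrix (Fin (r₁ + r₂ + m₁)) (Fin (r₁ + r₂ + m₁)) ℝ)
    (hU2 : ∀ v : EuclideanSpace ℝ (Fin (r₁ + r₂ + m₁)), v ∈ (colSpace Q)ᗮ →
      U.mulVec (fun i => v i) = fun i => -(v i)) :
    (∀ j : Fin (r₁ + n₁ + r₂ + n₂), r₁ + n₁ ≤ j.val →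
      (show EuclideanSpace ℝ (Fin (r₁ + r₂ + m₁)) from WithLp.toLp 2 fun i => N i j) ∈
        (colSpace Q)ᗮ) ∧
    (∀ j : Fin (r₁ + n₁ + r₂ + n₂), r₁ + n₁ ≤ j.val →
      U.mulVec (fun i => N i j) = fun i => -(N i j)) := by
  have hperp : ∀ j : Fin (r₁ + n₁ + r₂ + n₂), r₁ + n₁ ≤ j.val →
      WithLp.toLp 2 (N.col j) ∈ (colSpace Q)ᗮ := fun j hj =>
    (toLp_mem_orthogonal_colSpace_iff Q _).2 fun c =>
      (trace_transpose_mul_vecMulVec_single_one N _ j).symm.trans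
        (hN _ (vecMulVec_mulVec_single_mem_tangentConeAt hQ hj c))
  exact ⟨hperp, fun j hj => hU2 _ (hperp j hj)⟩

/-- Lemma 5.9: if `N` is normal to `X_ω` at `Q` (with respect to the
trace inner product), then its columns `N_j` for `j > r₁ + n₁` lie in `C(Q)ᗮ`;
consequently, the reflection `U_Q` through `C(Q)` sends those columns to `−N_j`
(so `Φ_Q` reverses the sign of the last `r₂ + n₂` columns of `N`). -/
theorem normal_columns_perp (r₁ r₂ m₁ n₁ n₂ : ℕ)
    (Q : Matrix (Fin (r₁ + r₂ + m₁)) (Fin (r₁ + n₁ + r₂ + n₂)) ℝ)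
    (hQ : memX (omegaBlk r₁ r₂ m₁ n₁ n₂) Q)
    (N : Matrix (Fin (r₁ + r₂ + m₁)) (Fin (r₁ + n₁ + r₂ + n₂)) ℝ)
    (hN : ∀ T ∈ tangentConeAt ℝ {B | memX (omegaBlk r₁ r₂ m₁ n₁ n₂) B} Q,
      Matrix.trace (Nᵀ * T) = 0)
    (U : Matrix (Fin (r₁ + r₂ + m₁)) (Fin (r₁ + r₂ + m₁)) ℝ)
    (hU1 : ∀ v : EuclideanSpace ℝ (Fin (r₁ + r₂ + m₁)), v ∈ colSpace Q →
      U.mulVec (fun i => v i) = fun i => v i)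
    (hU2 : ∀ v : EuclideanSpace ℝ (Fin (r₁ + r₂ + m₁)), v ∈ (colSpace Q)ᗮ →
      U.mulVec (fun i => v i) = fun i => -(v i)) :
    (∀ j : Fin (r₁ + n₁ + r₂ + n₂), r₁ + n₁ ≤ j.val →
      (show EuclideanSpace ℝ (Fin (r₁ + r₂ + m₁)) from WithLp.toLp 2 fun i => N i j) ∈
        (colSpace Q)ᗮ) ∧
    (∀ j : Fin (r₁ + n₁ + r₂ + n₂), r₁ + n₁ ≤ j.val →
      U.mulVec (fun i => N i j) = fun i => -(N i j)) :=
  normal_columns_perp_general r₁ r₂ m₁ n₁ n₂ Q hQ N hN U hU2
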